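/- For m, n ≥ 2, the Laplacian spectrum of the generalized fan graph F_{m,n} consists of: 0 with multiplicity 1, m + n with multiplicity 1, n with multiplicity m - 1, and m + 2 - 2cos(πj/n) with multiplicity 1 for each j = 1, ..., n-1. -/

import Mathlib

open scoped Classical
open Polynomial

/-- The join `G + H` of two simple graphs. -/
def joinGraph {V W : Type*} (G : SimpleGraph V) (H : SimpleGraph W) : SimpleGraph (V ⊕ W) where
  Adj x y :=
    match x, y with
    | Sum.inl a, Sum.inl b => G.Adj a b
    | Sum.inr a, Sum.inr b => H.Adj a b
    | _, _ => True
  symm := by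
    constructor
    rintro (a | a) (b | b) h
    · exact G.adj_symm h
    · trivial
    · trivial
    · exact H.adj_symm h
  loopless := by
    constructor
    rintro (a | a) h
    · exact G.ne_of_adj h rfl
    · exact H.ne_of_adj h rfl

/-- The generalized fan graph `F_{m,n}`, the join of the empty graph on `m` vertices
with the path on `n` vertices. -/
def genFan (m n : ℕ) : SimpleGraph (Fin m ⊕ Fin n) :=
  joinGraph (⊥ : SimpleGraph (Fin m)) (SimpleGraph.pathGraph n)

namespace FanAux

open Finset Matrix

/-! ### Trigonometric identities -/

lemma trigA (a : ℝ) : Real.cos a - Real.cos (3*a) = (2 - 2*Real.cos (2*a)) * Real.cos a := by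
  rw [show (3:ℝ)*a = a + a + a by ring, show (2:ℝ)*a = a + a by ring,
    Real.cos_add, Real.cos_add, Real.sin_add]
  linear_combination (Real.cos a) * (Real.sin_sq_add_cos_sq a)

lemma trigB (x y : ℝ) : Real.cos (x + y) + Real.cos (x - y) = 2 * Real.cos x * Real.cos y := by
  rw [Real.cos_add, Real.cos_sub]; ring

lemma sumA (n s : ℕ) (hs : 0 < s) (hsn : s < 2*n) :
    ∑ b ∈ range n, Real.cos (Real.pi * s * (2*b+1) / (2*n)) = 0 := by
  have hn : 0 < n := by omega
  set a : ℝ := Real.pi * s / (2*n) with ha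
  have hn' : (n:ℝ) ≠ 0 := Nat.cast_ne_zero.mpr hn.ne'
  have harg : ∀ b : ℕ, Real.pi * s * (2*b+1) / (2*n) = (2*b+1) * a := by
    intro b; rw [ha]; field_simp
  have hsin : Real.sin a ≠ 0 := by
    apply ne_of_gt
    apply Real.sin_pos_of_pos_of_lt_pi
    · apply div_pos (by positivity) (by positivity)
    · rw [ha, div_lt_iff₀ (by positivity)]
      have : (s:ℝ) < 2*n := by exact_mod_cast hsn
      nlinarith [Real.pi_pos]
  have tele : ∑ b ∈ range n, (Real.sin ((2*(b+1):ℕ) * a) - Real.sin ((2*b:ℕ) * a))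
      = Real.sin ((2*n:ℕ)*a) - Real.sin ((2*0:ℕ)*a) := by
    apply Finset.sum_range_sub (f := fun b => Real.sin ((2*b:ℕ) * a))
  have hend : Real.sin ((2*n:ℕ)*a) = 0 := by
    have : ((2*n:ℕ):ℝ)*a = s * Real.pi := by push_cast [ha]; field_simp
    rw [this, Real.sin_nat_mul_pi]
  have hterm : ∀ b : ℕ, Real.sin ((2*(b+1):ℕ) * a) - Real.sin ((2*b:ℕ) * a)
      = 2 * Real.sin a * Real.cos ((2*b+1)*a) := by
    intro b
    have h1 : ((2*(b+1):ℕ):ℝ) * a = (2*b+1)*a + a := by push_cast; ring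
    have h2 : ((2*b:ℕ):ℝ) * a = (2*b+1)*a - a := by push_cast; ring
    rw [h1, h2, Real.sin_add, Real.sin_sub]; ring
  have hz : ∑ b ∈ range n, 2 * Real.sin a * Real.cos ((2*b+1)*a) = 0 := by
    rw [← Finset.sum_congr rfl (fun b _ => hterm b), tele, hend]; simp
  rw [← Finset.mul_sum] at hz
  rcases mul_eq_zero.mp hz with h | h
  · exact absurd h (by simpa using hsin)
  · calc ∑ b ∈ range n, Real.cos (Real.pi * s * (2*b+1) / (2*n))
        = ∑ b ∈ range n, Real.cos ((2*b+1) * a) := by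
          exact Finset.sum_congr rfl fun b _ => by rw [harg b]
      _ = 0 := h

/-! ### The eigenvector entries -/

noncomputable def wfun (kv t : ℕ) : ℝ := if t < kv then 1 else if t = kv then -(kv:ℝ) else 0

noncomputable def Vf (n jv t : ℕ) : ℝ := Real.cos (Real.pi * jv * (2*t+1) / (2*n))

lemma sum_wfun_mul (m kv : ℕ) (hk : kv < m) (g : ℕ → ℝ) (hg : ∀ t, t ≤ kv → g t = 1) :
    ∑ t ∈ range m, wfun kv t * g t = 0 := by
  rw [Finset.range_eq_Ico, ← Finset.sum_Ico_consecutive _ (Nat.zero_le kv) (le_of_lt hk)]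
  have h1 : ∑ t ∈ Finset.Ico 0 kv, wfun kv t * g t = kv := by
    have hc : ∀ t ∈ Finset.Ico 0 kv, wfun kv t * g t = 1 := by
      intro t ht
      have : t < kv := (Finset.mem_Ico.mp ht).2
      simp [wfun, this, hg t this.le]
    rw [Finset.sum_congr rfl hc, Finset.sum_const, Nat.card_Ico]
    simp
  have h2 : ∑ t ∈ Finset.Ico kv m, wfun kv t * g t = -(kv:ℝ) := by
    have hc : ∀ t ∈ Finset.Ico kv m, wfun kv t * g t = if t = kv then -(kv:ℝ) else 0 := by
      intro t ht
      have h := (Finset.mem_Ico.mp ht).1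
      by_cases he : t = kv
      · subst he; simp [wfun, hg t le_rfl]
      · have : ¬ t < kv := not_lt.mpr h
        simp [wfun, this, he]
    rw [Finset.sum_congr rfl hc, Finset.sum_ite_eq' _ kv]
    simp [Finset.mem_Ico.mpr ⟨le_rfl, hk⟩]
  rw [h1, h2]; ring

lemma sum_wfun (m kv : ℕ) (hk : kv < m) : ∑ t ∈ range m, wfun kv t = 0 := by
  have := sum_wfun_mul m kv hk (fun _ => 1) (fun _ _ => rfl)
  simpa using this

lemma sum_wfun_sq (m kv : ℕ) (hk : kv < m) :
    ∑ t ∈ range m, wfun kv t * wfun kv t = kv + kv^2 := by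
  rw [Finset.range_eq_Ico, ← Finset.sum_Ico_consecutive _ (Nat.zero_le kv) (le_of_lt hk)]
  have h1 : ∑ t ∈ Finset.Ico 0 kv, wfun kv t * wfun kv t = kv := by
    have hc : ∀ t ∈ Finset.Ico 0 kv, wfun kv t * wfun kv t = 1 := by
      intro t ht
      have : t < kv := (Finset.mem_Ico.mp ht).2
      simp [wfun, this]
    rw [Finset.sum_congr rfl hc, Finset.sum_const, Nat.card_Ico]
    simp
  have h2 : ∑ t ∈ Finset.Ico kv m, wfun kv t * wfun kv t = (kv:ℝ)^2 := by
    have hc : ∀ t ∈ Finset.Ico kv m, wfun kv t * wfun kv t = if t = kv then (kv:ℝ)^2 else 0 := by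
      intro t ht
      have h := (Finset.mem_Ico.mp ht).1
      by_cases he : t = kv
      · subst he; simp [wfun]; ring
      · have : ¬ t < kv := not_lt.mpr h
        simp [wfun, this, he]
    rw [Finset.sum_congr rfl hc, Finset.sum_ite_eq' _ kv]
    simp [Finset.mem_Ico.mpr ⟨le_rfl, hk⟩]
  rw [h1, h2]

lemma wfun_mul_wfun (kv kv' t : ℕ) (h : kv < kv') : wfun kv t * wfun kv' t = wfun kv t := by
  unfold wfun
  rcases lt_trichotomy t kv with ht | ht | ht
  · simp [ht, lt_trans ht h]
  · subst ht; simp [lt_irrefl, h]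
  · have h1 : ¬ t < kv := not_lt.mpr ht.le
    have h2 : t ≠ kv := ht.ne'
    simp [h1, h2]

lemma sumV (n jv : ℕ) (h0 : 0 < jv) (h1 : jv < n) : ∑ b : Fin n, Vf n jv b.val = 0 := by
  rw [Fin.sum_univ_eq_sum_range (fun t => Vf n jv t) n]
  exact sumA n jv h0 (by omega)

lemma sumVsq (n jv : ℕ) (h0 : 0 < jv) (h1 : jv < n) :
    ∑ b : Fin n, Vf n jv b.val * Vf n jv b.val = n/2 := by
  rw [Fin.sum_univ_eq_sum_range (fun t => Vf n jv t * Vf n jv t) n]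
  have hn0 : (n:ℝ) ≠ 0 := Nat.cast_ne_zero.mpr (by omega)
  have hc : ∀ t ∈ range n, Vf n jv t * Vf n jv t
      = 1/2 + Real.cos (Real.pi * ((2*jv : ℕ):ℝ) * (2*t+1) / (2*n)) / 2 := by
    intro t _
    unfold Vf
    rw [← pow_two, Real.cos_sq]
    congr 2
    push_cast
    field_simp
  rw [Finset.sum_congr rfl hc, Finset.sum_add_distrib, Finset.sum_const, ← Finset.sum_div,
    sumA n (2*jv) (by omega) (by omega), zero_div, add_zero, Finset.card_range, nsmul_eq_mul]
  ring

lemma sumVV (n j j' : ℕ) (h0 : 0 < j') (hlt : j' < j) (h1 : j < n) :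
    ∑ b : Fin n, Vf n j b.val * Vf n j' b.val = 0 := by
  rw [Fin.sum_univ_eq_sum_range (fun t => Vf n j t * Vf n j' t) n]
  have hn0 : (n:ℝ) ≠ 0 := Nat.cast_ne_zero.mpr (by omega)
  have hc : ∀ t ∈ range n, Vf n j t * Vf n j' t
      = Real.cos (Real.pi * ((j+j' : ℕ):ℝ) * (2*t+1) / (2*n)) / 2
        + Real.cos (Real.pi * ((j-j' : ℕ):ℝ) * (2*t+1) / (2*n)) / 2 := by
    intro t _
    unfold Vf
    have e1 : Real.pi * (↑(j+j'):ℝ) * (2*t+1) / (2*n)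
        = Real.pi * j * (2*t+1) / (2*n) + Real.pi * j' * (2*t+1) / (2*n) := by
      push_cast; field_simp
    have e2 : Real.pi * (↑(j-j'):ℝ) * (2*t+1) / (2*n)
        = Real.pi * j * (2*t+1) / (2*n) - Real.pi * j' * (2*t+1) / (2*n) := by
      have : ((j - j' : ℕ):ℝ) = (j:ℝ) - j' := by
        push_cast [Nat.cast_sub hlt.le]; ring
      rw [this]; field_simp
    rw [e1, e2]
    linear_combination -(trigB (Real.pi * j * (2*t+1) / (2*n)) (Real.pi * j' * (2*t+1) / (2*n)))/2
  rw [Finset.sum_congr rfl hc, Finset.sum_add_distrib, ← Finset.sum_div, ← Finset.sum_div,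
    sumA n (j+j') (by omega) (by omega), sumA n (j-j') (by omega) (by omega)]
  simp

/-! ### the path eigenvector relation -/

lemma path_eigen (n : ℕ) (hn : 2 ≤ n) (jv : ℕ) (b : Fin n) :
    (∑ c : Fin n, (if (SimpleGraph.pathGraph n).Adj b c then (1:ℝ) else 0)) * Vf n jv b.val
      - ∑ c : Fin n, (if (SimpleGraph.pathGraph n).Adj b c then Vf n jv c.val else 0)
    = (2 - 2*Real.cos (Real.pi * jv / n)) * Vf n jv b.val := by
  have hn0 : (n:ℝ) ≠ 0 := Nat.cast_ne_zero.mpr (by omega)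
  set a : ℝ := Real.pi * jv / (2*n) with ha
  have hV : ∀ t : ℕ, Vf n jv t = Real.cos ((2*t+1) * a) := by
    intro t; unfold Vf; congr 1; rw [ha]; field_simp
  have hcos2 : Real.cos (Real.pi * jv / n) = Real.cos (2*a) := by
    congr 1; rw [ha]; field_simp
  have hcomb : (∑ c : Fin n, (if (SimpleGraph.pathGraph n).Adj b c then (1:ℝ) else 0)) * Vf n jv b.val
      - ∑ c : Fin n, (if (SimpleGraph.pathGraph n).Adj b c then Vf n jv c.val else 0)
      = ∑ c : Fin n, (if (SimpleGraph.pathGraph n).Adj b c then Vf n jv b.val - Vf n jv c.val else 0) := by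
    rw [Finset.sum_mul, ← Finset.sum_sub_distrib]
    apply Finset.sum_congr rfl
    intro c _
    by_cases h : (SimpleGraph.pathGraph n).Adj b c <;> simp [h]
  rw [hcomb]
  have hsum : ∑ c : Fin n, (if (SimpleGraph.pathGraph n).Adj b c then Vf n jv b.val - Vf n jv c.val else 0)
      = ∑ t ∈ range n, (if (b.val + 1 = t ∨ t + 1 = b.val) then Vf n jv b.val - Vf n jv t else 0) := by
    rw [← Fin.sum_univ_eq_sum_range (fun t => if (b.val + 1 = t ∨ t + 1 = b.val) then Vf n jv b.val - Vf n jv t else 0) n]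
    apply Finset.sum_congr rfl
    intro c _
    by_cases h : (SimpleGraph.pathGraph n).Adj b c
    · rw [if_pos h, if_pos (SimpleGraph.pathGraph_adj.mp h)]
    · rw [if_neg h, if_neg (fun hc => h (SimpleGraph.pathGraph_adj.mpr hc))]
  rw [hsum]
  have hsplit : ∀ t : ℕ, (if (b.val + 1 = t ∨ t + 1 = b.val) then Vf n jv b.val - Vf n jv t else 0)
      = (if b.val + 1 = t then Vf n jv b.val - Vf n jv t else 0)
        + (if t + 1 = b.val then Vf n jv b.val - Vf n jv t else 0) := by
    intro t
    by_cases h1 : b.val + 1 = t <;> by_cases h2 : t + 1 = b.val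
    · omega
    · simp [h1, h2]
    · simp [h1, h2]
    · simp [h1, h2]
  rw [Finset.sum_congr rfl (fun t _ => hsplit t), Finset.sum_add_distrib]
  have hsum1 : ∑ t ∈ range n, (if b.val + 1 = t then Vf n jv b.val - Vf n jv t else 0)
      = if b.val + 1 < n then Vf n jv b.val - Vf n jv (b.val+1) else 0 := by
    rw [Finset.sum_ite_eq]
    simp [Finset.mem_range]
  rw [hsum1]
  have hblt : b.val < n := b.isLt
  rcases Nat.eq_zero_or_eq_succ_pred b.val with hb0 | hbs
  · rw [hb0]
    have h2 : ∑ t ∈ range n, (if t + 1 = 0 then Vf n jv 0 - Vf n jv t else 0) = 0 := by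
      apply Finset.sum_eq_zero; intro t _; simp
    rw [h2, if_pos (by omega : 0 + 1 < n)]
    simp only [hV, hcos2]
    push_cast
    norm_num
    linear_combination trigA a
  · set s := b.val - 1 with hs
    have hbv : b.val = s + 1 := by omega
    have h2 : ∑ t ∈ range n, (if t + 1 = b.val then Vf n jv b.val - Vf n jv t else 0)
        = Vf n jv b.val - Vf n jv s := by
      have heq : ∀ t : ℕ, (t + 1 = b.val) = (t = s) := by intro t; simp; omega
      simp_rw [heq]
      rw [Finset.sum_ite_eq' (range n) s]
      simp [Finset.mem_range]; intro h; omega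
    rw [h2]
    rcases lt_or_ge (b.val + 1) n with hlt | hge
    · rw [if_pos hlt]
      simp only [hV, hcos2, hbv]
      push_cast
      have e1 : ((2:ℝ)*(s+1)+1)*a = (2*s+3)*a := by ring
      have e2 : ((2:ℝ)*(s+1+1)+1)*a = ((2*s+3)*a) + 2*a := by ring
      have e3 : ((2:ℝ)*s+1)*a = ((2*s+3)*a) - 2*a := by ring
      rw [e1, e2, e3]
      linear_combination - trigB ((2*(s:ℝ)+3)*a) (2*a)
    · have hbn : b.val + 1 = n := by omega
      rw [if_neg (by omega)]
      have h2na : (2*(n:ℝ)) * a = Real.pi * jv := by rw [ha]; field_simp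
      have hsin : Real.sin (Real.pi * jv) = 0 := by
        rw [show Real.pi * jv = (jv:ℝ) * Real.pi by ring]
        exact Real.sin_nat_mul_pi jv
      simp only [hV, hcos2, hbv]
      push_cast
      have hns : (n:ℝ) = (s:ℝ) + 2 := by
        have : n = s + 2 := by omega
        exact_mod_cast congrArg (Nat.cast : ℕ → ℝ) this
      have e1 : ((2:ℝ)*(s+1)+1)*a = Real.pi * jv - a := by
        rw [← h2na, hns]; ring
      have e2 : ((2:ℝ)*s+1)*a = Real.pi * jv - 3*a := by
        rw [← h2na, hns]; ring
      rw [e1, e2, Real.cos_sub, Real.cos_sub, hsin]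
      linear_combination (Real.cos (Real.pi * jv)) * trigA a

/-! ### charpoly tools -/

lemma charpoly_eq_of_similar {ι : Type*} [Fintype ι] [DecidableEq ι]
    (L P D : Matrix ι ι ℝ) (h : L * P = P * D) (hP : P.det ≠ 0) :
    L.charpoly = D.charpoly := by
  have key : charmatrix L * P.map C = P.map C * charmatrix D := by
    have hmap : (L * P).map (C : ℝ →+* ℝ[X]) = (P * D).map C := by rw [h]
    rw [Matrix.map_mul, Matrix.map_mul] at hmap
    simp only [charmatrix, sub_mul, mul_sub]
    rw [Matrix.scalar_commute X (fun r => Commute.all _ _) (P.map C)]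
    simp only [RingHom.mapMatrix_apply]
    rw [hmap]
  have hdet := congrArg Matrix.det key
  rw [Matrix.det_mul, Matrix.det_mul] at hdet
  have hPd : (P.map (C:ℝ →+* ℝ[X])).det = C P.det := (RingHom.map_det (C:ℝ →+* ℝ[X]) P).symm
  rw [hPd] at hdet
  have hC : (C P.det : ℝ[X]) ≠ 0 := by simpa using hP
  unfold Matrix.charpoly
  rw [mul_comm] at hdet
  exact mul_left_cancel₀ hC hdet

lemma charpoly_diagonal {ι : Type*} [Fintype ι] [DecidableEq ι] (d : ι → ℝ) :
    (Matrix.diagonal d).charpoly = ∏ i, (X - C (d i)) := by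
  have h : charmatrix (Matrix.diagonal d) = Matrix.diagonal (fun i => X - C (d i)) := by
    ext i j
    by_cases hij : i = j
    · subst hij; simp [charmatrix_apply_eq]
    · rw [charmatrix_apply_ne _ _ _ hij, Matrix.diagonal_apply_ne _ hij,
        Matrix.diagonal_apply_ne _ hij]
      simp
  rw [Matrix.charpoly, h, Matrix.det_diagonal]

/-! ### the eigenvector matrix -/

noncomputable def Pm (m n : ℕ) : Matrix (Fin m ⊕ Fin n) (Fin m ⊕ Fin n) ℝ :=
  Matrix.of fun i j =>
    match i, j with
    | Sum.inl a, Sum.inl k => if k.val = 0 then 1 else wfun k.val a.val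
    | Sum.inr _, Sum.inl k => if k.val = 0 then 1 else 0
    | Sum.inl _, Sum.inr j => if j.val = 0 then (n:ℝ) else 0
    | Sum.inr b, Sum.inr j => if j.val = 0 then -(m:ℝ) else Vf n j.val b.val

noncomputable def dv (m n : ℕ) : Fin m ⊕ Fin n → ℝ
  | Sum.inl k => if k.val = 0 then 0 else (n:ℝ)
  | Sum.inr j => if j.val = 0 then (m:ℝ)+(n:ℝ) else (m:ℝ) + 2 - 2*Real.cos (Real.pi * j.val / n)

noncomputable def ev (m n : ℕ) : Fin m ⊕ Fin n → ℝ
  | Sum.inl k => if k.val = 0 then (m:ℝ)+(n:ℝ) else (k.val:ℝ) + (k.val:ℝ)^2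
  | Sum.inr j => if j.val = 0 then (m:ℝ)*(n:ℝ)^2+(n:ℝ)*(m:ℝ)^2 else (n:ℝ)/2

@[simp] lemma Pm_ll (m n : ℕ) (a k : Fin m) :
    Pm m n (Sum.inl a) (Sum.inl k) = if k.val = 0 then 1 else wfun k.val a.val := rfl
@[simp] lemma Pm_rl (m n : ℕ) (b : Fin n) (k : Fin m) :
    Pm m n (Sum.inr b) (Sum.inl k) = if k.val = 0 then 1 else 0 := rfl
@[simp] lemma Pm_lr (m n : ℕ) (a : Fin m) (j : Fin n) :
    Pm m n (Sum.inl a) (Sum.inr j) = if j.val = 0 then (n:ℝ) else 0 := rfl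
@[simp] lemma Pm_rr (m n : ℕ) (b j : Fin n) :
    Pm m n (Sum.inr b) (Sum.inr j) = if j.val = 0 then -(m:ℝ) else Vf n j.val b.val := rfl

lemma dv_l (m n : ℕ) (k : Fin m) :
    dv m n (Sum.inl k) = if k.val = 0 then 0 else (n:ℝ) := rfl
lemma dv_r (m n : ℕ) (j : Fin n) :
    dv m n (Sum.inr j) = if j.val = 0 then (m:ℝ)+(n:ℝ) else (m:ℝ) + 2 - 2*Real.cos (Real.pi * j.val / n) := rfl
lemma ev_l (m n : ℕ) (k : Fin m) :
    ev m n (Sum.inl k) = if k.val = 0 then (m:ℝ)+(n:ℝ) else (k.val:ℝ) + (k.val:ℝ)^2 := rfl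
lemma ev_r (m n : ℕ) (j : Fin n) :
    ev m n (Sum.inr j) = if j.val = 0 then (m:ℝ)*(n:ℝ)^2+(n:ℝ)*(m:ℝ)^2 else (n:ℝ)/2 := rfl

/-! ### graph facts -/

lemma fan_adj_ll {m n : ℕ} (a c : Fin m) : (genFan m n).Adj (Sum.inl a) (Sum.inl c) ↔ False := by
  simp [genFan, joinGraph]

lemma fan_adj_lr {m n : ℕ} (a : Fin m) (b : Fin n) :
    (genFan m n).Adj (Sum.inl a) (Sum.inr b) ↔ True := by
  simp [genFan, joinGraph]

lemma fan_adj_rl {m n : ℕ} (b : Fin n) (a : Fin m) :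
    (genFan m n).Adj (Sum.inr b) (Sum.inl a) ↔ True := by
  simp [genFan, joinGraph]

lemma fan_adj_rr {m n : ℕ} (b c : Fin n) :
    (genFan m n).Adj (Sum.inr b) (Sum.inr c) ↔ (SimpleGraph.pathGraph n).Adj b c := by
  simp [genFan, joinGraph]

lemma degree_cast {ι : Type*} [Fintype ι] [DecidableEq ι] (G : SimpleGraph ι)
    [DecidableRel G.Adj] (v : ι) :
    (G.degree v : ℝ) = ∑ u, (if G.Adj v u then (1:ℝ) else 0) := by
  rw [SimpleGraph.degree, SimpleGraph.neighborFinset_eq_filter, Finset.card_filter]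
  push_cast
  simp

lemma lap_mul_apply {ι : Type*} [Fintype ι] [DecidableEq ι] (G : SimpleGraph ι)
    [DecidableRel G.Adj] (P : Matrix ι ι ℝ) (i j : ι) :
    (G.lapMatrix ℝ * P) i j
      = (G.degree i : ℝ) * P i j - ∑ k, (if G.Adj i k then P k j else 0) := by
  rw [Matrix.mul_apply]
  simp only [SimpleGraph.lapMatrix, Matrix.sub_apply, sub_mul, Finset.sum_sub_distrib]
  congr 1
  · simp only [SimpleGraph.degMatrix, Matrix.diagonal_apply, ite_mul, zero_mul]
    rw [Finset.sum_ite_eq univ i (fun k => (G.degree i : ℝ) * P k j)]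
    simp
  · apply Finset.sum_congr rfl
    intro k _
    simp [SimpleGraph.adjMatrix_apply, ite_mul]

lemma fan_eig (m n : ℕ) (hm : 2 ≤ m) (hn : 2 ≤ n) :
    (genFan m n).lapMatrix ℝ * Pm m n = Pm m n * Matrix.diagonal (dv m n) := by
  have hws : ∀ k : Fin m, ∑ a : Fin m, wfun k.val a.val = 0 := by
    intro k
    rw [Fin.sum_univ_eq_sum_range (fun t => wfun k.val t) m]
    exact sum_wfun m k.val k.isLt
  have hdegl : ∀ a : Fin m, ((genFan m n).degree (Sum.inl a) : ℝ) = n := by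
    intro a
    rw [degree_cast, Fintype.sum_sum_type]
    simp [fan_adj_ll, fan_adj_lr]
  have hdegr : ∀ b : Fin n, ((genFan m n).degree (Sum.inr b) : ℝ)
      = m + ∑ c : Fin n, (if (SimpleGraph.pathGraph n).Adj b c then (1:ℝ) else 0) := by
    intro b
    rw [degree_cast, Fintype.sum_sum_type]
    congr 1
    · simp [fan_adj_rl]
  have hnsl : ∀ (a : Fin m) (j : Fin m ⊕ Fin n),
      ∑ k, (if (genFan m n).Adj (Sum.inl a) k then Pm m n k j else 0)
        = ∑ b : Fin n, Pm m n (Sum.inr b) j := by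
    intro a j
    rw [Fintype.sum_sum_type]
    simp [fan_adj_ll, fan_adj_lr]
  have hnsr : ∀ (b : Fin n) (j : Fin m ⊕ Fin n),
      ∑ k, (if (genFan m n).Adj (Sum.inr b) k then Pm m n k j else 0)
        = (∑ a : Fin m, Pm m n (Sum.inl a) j)
          + ∑ c : Fin n, (if (SimpleGraph.pathGraph n).Adj b c then Pm m n (Sum.inr c) j else 0) := by
    intro b j
    rw [Fintype.sum_sum_type]
    congr 1
    · simp [fan_adj_rl]
  ext i j
  rw [Matrix.mul_diagonal, lap_mul_apply]
  rcases i with a | b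
  · rw [hdegl, hnsl]
    rcases j with k | jj
    · simp only [Pm_ll, Pm_rl, dv_l]
      by_cases hk : k.val = 0
      · simp only [if_pos hk]
        have hs : ∑ _b : Fin n, (1:ℝ) = n := by simp
        rw [hs]; try ring
      · simp only [if_neg hk]
        have hs : ∑ _b : Fin n, (0:ℝ) = 0 := by simp
        rw [hs]; try ring
    · simp only [Pm_lr, Pm_rr, dv_r]
      by_cases hj : jj.val = 0
      · simp only [if_pos hj]
        have hs : ∑ _b : Fin n, -(m:ℝ) = (n:ℝ) * -(m:ℝ) := by
          rw [Finset.sum_const, Finset.card_univ, Fintype.card_fin, nsmul_eq_mul]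
        rw [hs]; try ring
      · simp only [if_neg hj]
        rw [sumV n jj.val (Nat.pos_of_ne_zero hj) jj.isLt]
        ring
  · rw [hdegr, hnsr]
    rcases j with k | jj
    · simp only [Pm_ll, Pm_rl, dv_l]
      by_cases hk : k.val = 0
      · simp only [if_pos hk]
        have hs : ∑ _a : Fin m, (1:ℝ) = m := by simp
        rw [hs]; try ring
      · simp only [if_neg hk]
        have h1 : ∑ c : Fin n, (if (SimpleGraph.pathGraph n).Adj b c then (0:ℝ) else 0) = 0 := by
          simp
        rw [hws k, h1]; try ring
    · simp only [Pm_lr, Pm_rr, dv_r]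
      by_cases hj : jj.val = 0
      · simp only [if_pos hj]
        have h1 : ∑ _a : Fin m, (n:ℝ) = (m:ℝ) * n := by
          rw [Finset.sum_const, Finset.card_univ, Fintype.card_fin, nsmul_eq_mul]
        have h2 : ∑ c : Fin n, (if (SimpleGraph.pathGraph n).Adj b c then -(m:ℝ) else 0)
            = (∑ c : Fin n, (if (SimpleGraph.pathGraph n).Adj b c then (1:ℝ) else 0)) * -(m:ℝ) := by
          rw [Finset.sum_mul]
          apply Finset.sum_congr rfl
          intro c _
          by_cases h : (SimpleGraph.pathGraph n).Adj b c <;> simp [h]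
        rw [h1, h2]; try ring
      · simp only [if_neg hj]
        have hp := path_eigen n hn jj.val b
        have h0 : ∑ _a : Fin m, (0:ℝ) = 0 := by simp
        rw [h0, zero_add]
        linear_combination hp

lemma fan_orth (m n : ℕ) (hm : 2 ≤ m) (hn : 2 ≤ n) :
    (Pm m n)ᵀ * Pm m n = Matrix.diagonal (ev m n) := by
  have hws : ∀ k : Fin m, ∑ a : Fin m, wfun k.val a.val = 0 := by
    intro k
    rw [Fin.sum_univ_eq_sum_range (fun t => wfun k.val t) m]
    exact sum_wfun m k.val k.isLt
  have hm1 : ∑ _a : Fin m, (1:ℝ) = m := by simp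
  have hn1 : ∑ _b : Fin n, (1:ℝ) = n := by simp
  ext j₁ j₂
  rw [Matrix.mul_apply]
  simp only [Matrix.transpose_apply]
  rw [Fintype.sum_sum_type]
  rcases j₁ with k | j <;> rcases j₂ with k' | j'
  · -- (inl k, inl k')
    simp only [Pm_ll, Pm_rl]
    by_cases hk : k.val = 0 <;> by_cases hk' : k'.val = 0
    · obtain rfl : k = k' := Fin.ext (hk.trans hk'.symm)
      rw [Matrix.diagonal_apply_eq, ev_l, if_pos hk]
      simp only [if_pos hk, mul_one]
      rw [hm1, hn1]
    · have hne : (Sum.inl k : Fin m ⊕ Fin n) ≠ Sum.inl k' := by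
        intro h; apply hk'; rw [← Sum.inl.inj h]; exact hk
      rw [Matrix.diagonal_apply_ne _ hne]
      simp only [if_pos hk, if_neg hk', one_mul, mul_zero]
      rw [hws k']
      simp
    · have hne : (Sum.inl k : Fin m ⊕ Fin n) ≠ Sum.inl k' := by
        intro h; apply hk; rw [Sum.inl.inj h]; exact hk'
      rw [Matrix.diagonal_apply_ne _ hne]
      simp only [if_neg hk, if_pos hk', mul_one, zero_mul]
      rw [hws k]
      simp
    · by_cases hkk : k = k'
      · subst hkk
        rw [Matrix.diagonal_apply_eq, ev_l, if_neg hk]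
        simp only [if_neg hk, mul_zero]
        rw [Fin.sum_univ_eq_sum_range (fun t => wfun k.val t * wfun k.val t) m,
          sum_wfun_sq m k.val k.isLt]
        simp
      · have hne : (Sum.inl k : Fin m ⊕ Fin n) ≠ Sum.inl k' := fun h => hkk (Sum.inl.inj h)
        rw [Matrix.diagonal_apply_ne _ hne]
        simp only [if_neg hk, if_neg hk', mul_zero]
        have hvne : k.val ≠ k'.val := fun h => hkk (Fin.ext h)
        have key : ∑ a : Fin m, wfun k.val a.val * wfun k'.val a.val = 0 := by
          rcases lt_or_gt_of_ne hvne with h | h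
          · calc ∑ a : Fin m, wfun k.val a.val * wfun k'.val a.val
                = ∑ a : Fin m, wfun k.val a.val :=
                  Finset.sum_congr rfl fun a _ => wfun_mul_wfun _ _ _ h
              _ = 0 := hws k
          · calc ∑ a : Fin m, wfun k.val a.val * wfun k'.val a.val
                = ∑ a : Fin m, wfun k'.val a.val :=
                  Finset.sum_congr rfl fun a _ => by rw [mul_comm]; exact wfun_mul_wfun _ _ _ h
              _ = 0 := hws k'
        rw [key]
        simp
  · -- (inl k, inr j')
    simp only [Pm_ll, Pm_rl, Pm_lr, Pm_rr]
    have hne : (Sum.inl k : Fin m ⊕ Fin n) ≠ Sum.inr j' := Sum.inl_ne_inr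
    rw [Matrix.diagonal_apply_ne _ hne]
    by_cases hk : k.val = 0 <;> by_cases hj' : j'.val = 0
    · simp only [if_pos hk, if_pos hj', one_mul]
      rw [Finset.sum_const, Finset.sum_const, Finset.card_univ, Finset.card_univ,
        Fintype.card_fin, Fintype.card_fin, nsmul_eq_mul, nsmul_eq_mul]
      ring
    · simp only [if_pos hk, if_neg hj', one_mul]
      rw [sumV n j'.val (Nat.pos_of_ne_zero hj') j'.isLt]
      simp
    · simp only [if_neg hk, if_pos hj', zero_mul]
      have : ∑ a : Fin m, wfun k.val a.val * (n:ℝ)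
          = (∑ a : Fin m, wfun k.val a.val) * (n:ℝ) := by rw [Finset.sum_mul]
      rw [this, hws k]
      simp
    · simp only [if_neg hk, if_neg hj', mul_zero, zero_mul]
      simp
  · -- (inr j, inl k')
    simp only [Pm_ll, Pm_rl, Pm_lr, Pm_rr]
    have hne : (Sum.inr j : Fin m ⊕ Fin n) ≠ Sum.inl k' := Sum.inr_ne_inl
    rw [Matrix.diagonal_apply_ne _ hne]
    by_cases hj : j.val = 0 <;> by_cases hk' : k'.val = 0
    · simp only [if_pos hj, if_pos hk', mul_one]
      rw [Finset.sum_const, Finset.sum_const, Finset.card_univ, Finset.card_univ,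
        Fintype.card_fin, Fintype.card_fin, nsmul_eq_mul, nsmul_eq_mul]
      ring
    · simp only [if_pos hj, if_neg hk', mul_zero]
      have : ∑ a : Fin m, (n:ℝ) * wfun k'.val a.val
          = (n:ℝ) * ∑ a : Fin m, wfun k'.val a.val := by rw [Finset.mul_sum]
      rw [this, hws k']
      simp
    · simp only [if_neg hj, if_pos hk', zero_mul, mul_one]
      rw [sumV n j.val (Nat.pos_of_ne_zero hj) j.isLt]
      simp
    · simp only [if_neg hj, if_neg hk', zero_mul, mul_zero]
      simp
  · -- (inr j, inr j')
    simp only [Pm_lr, Pm_rr]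
    by_cases hj : j.val = 0 <;> by_cases hj' : j'.val = 0
    · obtain rfl : j = j' := Fin.ext (hj.trans hj'.symm)
      rw [Matrix.diagonal_apply_eq, ev_r, if_pos hj]
      simp only [if_pos hj]
      rw [Finset.sum_const, Finset.sum_const, Finset.card_univ, Finset.card_univ,
        Fintype.card_fin, Fintype.card_fin, nsmul_eq_mul, nsmul_eq_mul]
      ring
    · have hne : (Sum.inr j : Fin m ⊕ Fin n) ≠ Sum.inr j' := by
        intro h; apply hj'; rw [← Sum.inr.inj h]; exact hj
      rw [Matrix.diagonal_apply_ne _ hne]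
      simp only [if_pos hj, if_neg hj', mul_zero, zero_mul]
      have : ∑ b : Fin n, -(m:ℝ) * Vf n j'.val b.val
          = -(m:ℝ) * ∑ b : Fin n, Vf n j'.val b.val := by rw [Finset.mul_sum]
      rw [this, sumV n j'.val (Nat.pos_of_ne_zero hj') j'.isLt]
      simp
    · have hne : (Sum.inr j : Fin m ⊕ Fin n) ≠ Sum.inr j' := by
        intro h; apply hj; rw [Sum.inr.inj h]; exact hj'
      rw [Matrix.diagonal_apply_ne _ hne]
      simp only [if_neg hj, if_pos hj', zero_mul, mul_zero]
      have : ∑ b : Fin n, Vf n j.val b.val * -(m:ℝ)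
          = (∑ b : Fin n, Vf n j.val b.val) * -(m:ℝ) := by rw [Finset.sum_mul]
      rw [this, sumV n j.val (Nat.pos_of_ne_zero hj) j.isLt]
      simp
    · by_cases hjj : j = j'
      · subst hjj
        rw [Matrix.diagonal_apply_eq, ev_r, if_neg hj]
        simp only [if_neg hj, zero_mul]
        rw [sumVsq n j.val (Nat.pos_of_ne_zero hj) j.isLt]
        simp
      · have hne : (Sum.inr j : Fin m ⊕ Fin n) ≠ Sum.inr j' := fun h => hjj (Sum.inr.inj h)
        rw [Matrix.diagonal_apply_ne _ hne]
        simp only [if_neg hj, if_neg hj', zero_mul]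
        have hvne : j.val ≠ j'.val := fun h => hjj (Fin.ext h)
        have key : ∑ b : Fin n, Vf n j.val b.val * Vf n j'.val b.val = 0 := by
          rcases lt_or_gt_of_ne hvne with h | h
          · calc ∑ b : Fin n, Vf n j.val b.val * Vf n j'.val b.val
                = ∑ b : Fin n, Vf n j'.val b.val * Vf n j.val b.val :=
                  Finset.sum_congr rfl fun b _ => mul_comm _ _
              _ = 0 := sumVV n j'.val j.val (Nat.pos_of_ne_zero hj) h j'.isLt
          · exact sumVV n j.val j'.val (Nat.pos_of_ne_zero hj') h j.isLt
        rw [key]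
        simp

lemma fan_det (m n : ℕ) (hm : 2 ≤ m) (hn : 2 ≤ n) : (Pm m n).det ≠ 0 := by
  have horth := fan_orth m n hm hn
  have hdet := congrArg Matrix.det horth
  rw [Matrix.det_mul, Matrix.det_transpose, Matrix.det_diagonal] at hdet
  have hprod : ∏ i, ev m n i ≠ 0 := by
    rw [Finset.prod_ne_zero_iff]
    rintro (k | j) -
    · rw [ev_l]
      by_cases hk : k.val = 0
      · rw [if_pos hk]; positivity
      · rw [if_neg hk]
        have : (0:ℝ) < k.val := by
          exact_mod_cast Nat.pos_of_ne_zero hk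
        positivity
    · rw [ev_r]
      by_cases hj : j.val = 0
      · rw [if_pos hj]
        have hm' : (0:ℝ) < m := by exact_mod_cast (by omega : 0 < m)
        have hn' : (0:ℝ) < n := by exact_mod_cast (by omega : 0 < n)
        positivity
      · rw [if_neg hj]
        have hn' : (0:ℝ) < n := by exact_mod_cast (by omega : 0 < n)
        positivity
  intro h
  rw [h, mul_zero] at hdet
  exact hprod hdet.symm

end FanAux

/-- for m, n ≥ 2, the Laplacian spectrum of the generalized fan graph consists of
0 (mult 1), m+n (mult 1), n (mult m-1), and m+2-2cos(πj/n) (mult 1) for j = 1,…,n-1. -/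
theorem lap_spectrum_genFan (m n : ℕ) (hm : 2 ≤ m) (hn : 2 ≤ n) :
    ((genFan m n).lapMatrix ℝ).charpoly =
      X * (X - C ((m : ℝ) + n)) * (X - C ((n : ℝ))) ^ (m - 1) *
        ∏ j ∈ Finset.Ico 1 n, (X - C ((m : ℝ) + 2 - 2 * Real.cos (Real.pi * j / n))) := by
  open FanAux in
  rw [charpoly_eq_of_similar _ (Pm m n) (Matrix.diagonal (dv m n)) (fan_eig m n hm hn)
    (fan_det m n hm hn), charpoly_diagonal, Fintype.prod_sum_type]
  have hp1 : ∏ k : Fin m, (X - C (FanAux.dv m n (Sum.inl k))) = X * (X - C ((n:ℝ)))^(m-1) := by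
    have hc : ∀ k : Fin m, X - C (FanAux.dv m n (Sum.inl k))
        = (fun t : ℕ => if t = 0 then X else X - C ((n:ℝ))) k.val := by
      intro k
      rw [FanAux.dv_l]
      by_cases h : k.val = 0 <;> simp [h]
    rw [Finset.prod_congr rfl (fun k _ => hc k),
      Fin.prod_univ_eq_prod_range (fun t => if t = 0 then X else X - C ((n:ℝ))) m,
      Finset.range_eq_Ico, ← Finset.prod_Ico_consecutive _ (Nat.zero_le 1) (by omega : 1 ≤ m)]
    have h1 : ∏ t ∈ Finset.Ico 0 1, (if t = 0 then X else X - C ((n:ℝ))) = X := by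
      rw [show Finset.Ico 0 1 = {0} from rfl]
      simp
    have h2 : ∏ t ∈ Finset.Ico 1 m, (if t = 0 then X else X - C ((n:ℝ)))
        = (X - C ((n:ℝ)))^(m-1) := by
      rw [Finset.prod_congr rfl (fun t ht => if_neg (by
        have := (Finset.mem_Ico.mp ht).1; omega)), Finset.prod_const, Nat.card_Ico]
    rw [h1, h2]
  have hp2 : ∏ j : Fin n, (X - C (FanAux.dv m n (Sum.inr j)))
      = (X - C ((m:ℝ) + n)) *
        ∏ j ∈ Finset.Ico 1 n, (X - C ((m : ℝ) + 2 - 2 * Real.cos (Real.pi * j / n))) := by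
    have hc : ∀ j : Fin n, X - C (FanAux.dv m n (Sum.inr j))
        = (fun t : ℕ => if t = 0 then X - C ((m:ℝ)+n)
            else X - C ((m : ℝ) + 2 - 2 * Real.cos (Real.pi * t / n))) j.val := by
      intro j
      rw [FanAux.dv_r]
      by_cases h : j.val = 0 <;> simp [h]
    rw [Finset.prod_congr rfl (fun j _ => hc j),
      Fin.prod_univ_eq_prod_range (fun t : ℕ => if t = 0 then X - C ((m:ℝ)+n) else X - C ((m : ℝ) + 2 - 2 * Real.cos (Real.pi * t / n))) n,
      Finset.range_eq_Ico, ← Finset.prod_Ico_consecutive _ (Nat.zero_le 1) (by omega : 1 ≤ n)]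
    have h1 : ∏ t ∈ Finset.Ico (0:ℕ) 1, (if t = 0 then X - C ((m:ℝ)+n)
        else X - C ((m : ℝ) + 2 - 2 * Real.cos (Real.pi * t / n))) = X - C ((m:ℝ)+n) := by
      rw [show Finset.Ico 0 1 = {0} from rfl]
      simp
    have h2 : ∏ t ∈ Finset.Ico 1 n, (if t = 0 then X - C ((m:ℝ)+n)
        else X - C ((m : ℝ) + 2 - 2 * Real.cos (Real.pi * t / n)))
        = ∏ t ∈ Finset.Ico 1 n, (X - C ((m : ℝ) + 2 - 2 * Real.cos (Real.pi * t / n))) := by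
      exact Finset.prod_congr rfl (fun t ht => if_neg (by
        have := (Finset.mem_Ico.mp ht).1; omega))
    rw [h1, h2]
  rw [hp1, hp2]
  ring
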